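/- arXiv:1811.09538 — 8 statements merged into one kernel-verified Lean document; each statement's English description precedes it below -/
import Mathlib

section
/- Let n = 2m+1 = k, t_i = i, and let p_1 ≥ p_2 ≥ … ≥ p_n > 0. Define S(p) = ∑_{j=m+1}^{2m+1} 1/p_j and the hider distribution h̄ with h̄_j = 1/(p_j S(p)) for j ≥ m+1 and h̄_j = 0 for j ≤ m. Then h̄ is a probability distribution on {1,…,n}, and for every feasible search set A ⊆ {1,…,n} (i.e., ∑_{i∈A} i ≤ n), the probability that the searcher finds and captures the hider satisfies ∑_{i∈A} h̄_i p_i ≤ 1/S(p). -/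
/-- For `n = 2m+1 = k`, search times `t_i = i` and nonincreasing positive
capture probabilities `p`, the hider distribution `h̄` with
`h̄_j = 1/(p_j S(p))` for `m+1 ≤ j ≤ n` and `h̄_j = 0` otherwise
(where `S(p) = ∑_{j=m+1}^{2m+1} 1/p_j`) is a probability distribution, and
against every feasible search set `A` (i.e. `∑_{i∈A} i ≤ n`) the probability
`∑_{i∈A} h̄_i p_i` that the searcher finds and captures the hider is at most
`1/S(p)`. -/
theorem hider_strategy_guarantee (m n : ℕ) (hn : n = 2 * m + 1)
    (p : ℕ → ℝ)
    (hpos : ∀ i ∈ Finset.Icc 1 n, 0 < p i)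
    (hple : ∀ i ∈ Finset.Icc 1 n, p i ≤ 1)
    (hmono : ∀ i j : ℕ, 1 ≤ i → i ≤ j → j ≤ n → p j ≤ p i)
    (S : ℝ) (hS : S = ∑ j ∈ Finset.Icc (m + 1) n, 1 / p j)
    (hbar : ℕ → ℝ)
    (hhbar : ∀ j, hbar j = if m + 1 ≤ j ∧ j ≤ n then 1 / (p j * S) else 0) :
    (∀ j, 0 ≤ hbar j) ∧
    (∑ j ∈ Finset.Icc 1 n, hbar j = 1) ∧
    (∀ A : Finset ℕ, A ⊆ Finset.Icc 1 n → (∑ i ∈ A, i) ≤ n →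
      ∑ i ∈ A, hbar i * p i ≤ 1 / S) := by
  have hmn : m + 1 ≤ n := by omega
  have hsub : Finset.Icc (m+1) n ⊆ Finset.Icc 1 n := by
    intro x hx; simp only [Finset.mem_Icc] at *; omega
  have hSpos : 0 < S := by
    rw [hS]
    apply Finset.sum_pos
    · intro j hj
      exact one_div_pos.mpr (hpos j (hsub hj))
    · exact ⟨m+1, Finset.mem_Icc.mpr ⟨le_refl _, hmn⟩⟩
  have h1 : ∀ j, 0 ≤ hbar j := by
    intro j
    rw [hhbar j]
    split
    · next h =>
      have := hpos j (Finset.mem_Icc.mpr ⟨by omega, h.2⟩)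
      positivity
    · exact le_refl 0
  refine ⟨h1, ?_, ?_⟩
  · have : ∑ j ∈ Finset.Icc 1 n, hbar j = ∑ j ∈ Finset.Icc (m+1) n, hbar j := by
      apply (Finset.sum_subset hsub ?_).symm
      intro x hx hx'
      rw [hhbar x]
      simp only [Finset.mem_Icc] at hx hx'
      rw [if_neg (by omega)]
    rw [this]
    have : ∑ j ∈ Finset.Icc (m+1) n, hbar j = ∑ j ∈ Finset.Icc (m+1) n, (1/p j) * (1/S) := by
      apply Finset.sum_congr rfl
      intro j hj
      simp only [Finset.mem_Icc] at hj
      rw [hhbar j, if_pos (by omega)]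
      field_simp
    rw [this, ← Finset.sum_mul, ← hS]
    field_simp
  · intro A hA hsum
    set B := A.filter (fun i => m + 1 ≤ i) with hB
    have hcard : B.card ≤ 1 := by
      rw [Finset.card_le_one]
      intro a ha b hb
      simp only [hB, Finset.mem_filter] at ha hb
      by_contra hab
      have : a + b ≤ ∑ i ∈ A, i := by
        have := Finset.add_sum_erase A id ha.1
        have hbe : b ∈ A.erase a := Finset.mem_erase.mpr ⟨fun h => hab h.symm, hb.1⟩
        have := Finset.single_le_sum (f := id) (fun i _ => Nat.zero_le i) hbe
        have := Finset.add_sum_erase A id ha.1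
        calc a + b ≤ a + ∑ i ∈ A.erase a, i :=
              Nat.add_le_add_left (Finset.single_le_sum (f := fun i => i) (fun i _ => Nat.zero_le i) hbe) a
          _ = ∑ i ∈ A, i := Finset.add_sum_erase A (fun i => i) ha.1
      omega
    have heq : ∑ i ∈ A, hbar i * p i = ∑ i ∈ B, hbar i * p i := by
      apply (Finset.sum_subset (Finset.filter_subset _ _) ?_).symm
      intro x hx hx'
      simp only [hB, Finset.mem_filter] at hx'
      have hxm : ¬ (m + 1 ≤ x) := fun h => hx' ⟨hx, h⟩
      rw [hhbar x, if_neg (by omega), zero_mul]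
    have heq2 : ∑ i ∈ B, hbar i * p i = B.card * (1 / S) := by
      rw [Finset.sum_congr rfl ?_, Finset.sum_const, nsmul_eq_mul]
      intro i hi
      simp only [hB, Finset.mem_filter] at hi
      have hin := Finset.mem_Icc.mp (hA hi.1)
      rw [hhbar i, if_pos ⟨hi.2, hin.2⟩]
      have hpi := (hpos i (hA hi.1)).ne'
      field_simp
    rw [heq, heq2]
    calc (B.card : ℝ) * (1 / S) ≤ 1 * (1 / S) := by
          apply mul_le_mul_of_nonneg_right _ (by positivity)
          exact_mod_cast hcard
      _ = 1 / S := one_mul _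
end

section
/- Let n = 2m+1 = k, t_i = i, and let p_1 ≥ p_2 ≥ … ≥ p_n > 0. Define S(p) = ∑_{j=m+1}^{2m+1} 1/p_j. Consider the mixed searcher strategy that chooses the set A_j = {j, n−j} (with A_n = {n}) with probability x_j = 1/(p_j S(p)) for j = m+1,…,n. Then: (i) each A_j is feasible (its total search time is at most n); (ii) the x_j sum to 1; and (iii) for every hiding location i ∈ {1,…,n}, the probability that the searcher finds and captures a hider at i, namely ∑_{j : i ∈ A_j} x_j · p_i, is at least 1/S(p). -/
/-- For `n = 2m+1 = k`, search times `t_i = i` and nonincreasing positive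
capture probabilities `p`, the mixed searcher strategy choosing the set
`A_j = {j, n−j}` (with `A_n = {n}`) with probability `x_j = 1/(p_j S(p))` for
`j = m+1,…,n` (where `S(p) = ∑_{j=m+1}^{2m+1} 1/p_j`) satisfies:
(i) each `A_j` is feasible, i.e. `∑_{i∈A_j} i ≤ n`;
(ii) the `x_j` sum to `1`;
(iii) against every hiding location `i ∈ {1,…,n}` the probability of finding
and capturing the hider, `(∑_{j : i ∈ A_j} x_j) · p_i`, is at least `1/S(p)`. -/
theorem searcher_strategy_guarantee (m n : ℕ) (hn : n = 2 * m + 1)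
    (p : ℕ → ℝ)
    (hpos : ∀ i ∈ Finset.Icc 1 n, 0 < p i)
    (hple : ∀ i ∈ Finset.Icc 1 n, p i ≤ 1)
    (hmono : ∀ i j : ℕ, 1 ≤ i → i ≤ j → j ≤ n → p j ≤ p i)
    (S : ℝ) (hS : S = ∑ j ∈ Finset.Icc (m + 1) n, 1 / p j)
    (Aset : ℕ → Finset ℕ)
    (hAset : ∀ j, Aset j = if j = n then ({n} : Finset ℕ) else {j, n - j})
    (x : ℕ → ℝ) (hx : ∀ j, x j = 1 / (p j * S)) :
    (∀ j ∈ Finset.Icc (m + 1) n, (∑ i ∈ Aset j, i) ≤ n) ∧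
    (∑ j ∈ Finset.Icc (m + 1) n, x j = 1) ∧
    (∀ i ∈ Finset.Icc 1 n,
      1 / S ≤ (∑ j ∈ (Finset.Icc (m + 1) n).filter (fun j => i ∈ Aset j), x j) * p i) := by
  have hposJ : ∀ j ∈ Finset.Icc (m + 1) n, 0 < p j := by
    intro j hj
    rw [Finset.mem_Icc] at hj
    exact hpos j (Finset.mem_Icc.mpr ⟨by omega, hj.2⟩)
  have hSpos : 0 < S := by
    rw [hS]
    apply Finset.sum_pos
    · intro j hj
      have := hposJ j hj
      positivity
    · exact ⟨n, Finset.mem_Icc.mpr ⟨by omega, le_refl n⟩⟩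
  refine ⟨?_, ?_, ?_⟩
  · -- (i)
    intro j hj
    rw [Finset.mem_Icc] at hj
    rw [hAset]
    by_cases h : j = n
    · simp [h]
    · rw [if_neg h]
      have hne : j ≠ n - j := by omega
      rw [Finset.sum_insert (by simp [hne]), Finset.sum_singleton]
      omega
  · -- (ii)
    have : ∑ j ∈ Finset.Icc (m + 1) n, x j
        = (∑ j ∈ Finset.Icc (m + 1) n, 1 / p j) / S := by
      rw [Finset.sum_div]
      apply Finset.sum_congr rfl
      intro j hj
      rw [hx j]; ring
    rw [this, ← hS, div_self (ne_of_gt hSpos)]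
  · -- (iii)
    intro i hi
    rw [Finset.mem_Icc] at hi
    have hxnonneg : ∀ j ∈ (Finset.Icc (m + 1) n).filter (fun j => i ∈ Aset j),
        0 ≤ x j := by
      intro j hj
      rw [Finset.mem_filter] at hj
      have := hposJ j hj.1
      rw [hx j]
      positivity
    have hpi : 0 < p i := hpos i (Finset.mem_Icc.mpr hi)
    -- pick j0
    by_cases hcase : m + 1 ≤ i
    · -- j0 = i
      have hmem : i ∈ (Finset.Icc (m + 1) n).filter (fun j => i ∈ Aset j) := by
        rw [Finset.mem_filter, Finset.mem_Icc]
        refine ⟨⟨hcase, hi.2⟩, ?_⟩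
        rw [hAset]
        by_cases h : i = n
        · simp [h]
        · rw [if_neg h]; exact Finset.mem_insert_self _ _
      have hle := Finset.single_le_sum hxnonneg hmem
      have h1 : x i * p i = 1 / S := by
        rw [hx i]
        field_simp
      calc 1 / S = x i * p i := h1.symm
        _ ≤ _ := mul_le_mul_of_nonneg_right hle (le_of_lt hpi)
    · -- j0 = n - i
      have hj0 : m + 1 ≤ n - i ∧ n - i ≤ n := by omega
      have hmem : n - i ∈ (Finset.Icc (m + 1) n).filter (fun j => i ∈ Aset j) := by
        rw [Finset.mem_filter, Finset.mem_Icc]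
        refine ⟨hj0, ?_⟩
        rw [hAset, if_neg (by omega : n - i ≠ n)]
        have : n - (n - i) = i := by omega
        rw [this]
        exact Finset.mem_insert_of_mem (Finset.mem_singleton_self _)
      have hle := Finset.single_le_sum hxnonneg hmem
      have hpj0 : 0 < p (n - i) := hposJ _ (Finset.mem_filter.mp hmem).1
      have hmle : p (n - i) ≤ p i := hmono i (n - i) hi.1 (by omega) (by omega)
      have h1 : 1 / S ≤ x (n - i) * p i := by
        rw [hx (n - i), one_div_mul_eq_div,
          div_le_div_iff₀ hSpos (mul_pos hpj0 hSpos)]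
        nlinarith
      calc 1 / S ≤ x (n - i) * p i := h1
        _ ≤ _ := mul_le_mul_of_nonneg_right hle (le_of_lt hpi)
end

section
/- Let n = 2m+1 = k, t_i = i, and let p_1 ≥ p_2 ≥ … ≥ p_n > 0, and set S(p) = ∑_{j=m+1}^{2m+1} 1/p_j. Then the game has value 1/S(p): there exist a mixed searcher strategy over feasible search sets whose expected capture probability against every hiding location is at least 1/S(p), and a hider probability distribution whose expected capture probability against every feasible search set is at most 1/S(p). -/
/-!
A feasible set has total search time at most `2m+1`, so it contains at most one of the large
locations `m+1, …, 2m+1`. Give each large location `j` the weight `1 / (S p_j)`; these weights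
sum to `1` and each makes `j` worth exactly `1/S`. The hider hides with these weights, so no
feasible set earns more than `1/S`. The searcher searches the feasible pair `{j, n - j}` with
the same weights: location `i` lies in the pair of `j = max i (n - i) ≥ i`, where `p_j ≤ p_i`,
so it is found with probability at least `p_i / (S p_j) ≥ 1/S`.
-/

/-- The feasible pure search strategies: subsets `A` of `{1,…,n}` whose total
search time `∑_{i∈A} t_i = ∑_{i∈A} i` (search times `t_i = i`) is at most `k`. -/
def feasibleSets (n k : ℕ) : Finset (Finset ℕ) :=
  (Finset.Icc 1 n).powerset.filter (fun A => (∑ i ∈ A, i) ≤ k)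

open Finset

theorem sum_filter_sum_fiberwise {ι α M : Type*} [AddCommMonoid M] [DecidableEq α]
    {s : Finset ι} {t : Finset α} {g : ι → α} (h : ∀ j ∈ s, g j ∈ t)
    (P : α → Prop) [DecidablePred P] (f : ι → M) :
    ∑ a ∈ t with P a, ∑ j ∈ s with g j = a, f j = ∑ j ∈ s with P (g j), f j := by
  rw [← sum_fiberwise_of_maps_to (s := {j ∈ s | P (g j)}) (t := {a ∈ t | P a}) (g := g)
    (fun j hj => by simp only [mem_filter] at hj ⊢; exact ⟨h j hj.1, hj.2⟩)]
  refine sum_congr rfl fun a ha => ?_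
  rw [filter_filter]
  refine sum_congr (filter_congr fun j _ => ?_) fun _ _ => rfl
  exact ⟨by rintro rfl; exact ⟨(mem_filter.mp ha).2, rfl⟩, fun hj => hj.2⟩

theorem sum_le_add_of_subset_pair {s : Finset ℕ} {a b : ℕ} (h : s ⊆ {a, b}) :
    ∑ i ∈ s, i ≤ a + b := by
  refine (sum_le_sum_of_subset h).trans ?_
  rcases eq_or_ne a b with rfl | hab
  · simp
  · rw [sum_pair hab]

theorem card_filter_lt_le_one_of_sum_le {m : ℕ} {A : Finset ℕ}
    (hA : ∑ i ∈ A, i ≤ 2 * m + 1) : #{i ∈ A | m < i} ≤ 1 := by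
  refine card_le_one.mpr fun a ha b hb => ?_
  rw [mem_filter] at ha hb
  by_contra hab
  have : a + b ≤ ∑ i ∈ A, i :=
    calc a + b = ∑ i ∈ {a, b}, i := (sum_pair (f := id) hab).symm
      _ ≤ ∑ i ∈ A, i :=
        sum_le_sum_of_subset (insert_subset ha.1 (singleton_subset_iff.mpr hb.1))
  omega

def pairSet (n j : ℕ) : Finset ℕ := {i ∈ Icc 1 n | i = j ∨ i + j = n}

theorem pairSet_mem_feasibleSets {n j : ℕ} (hj : j ≤ n) : pairSet n j ∈ feasibleSets n n := by
  refine mem_filter.mpr ⟨mem_powerset.mpr (filter_subset _ _), ?_⟩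
  calc ∑ i ∈ pairSet n j, i ≤ j + (n - j) := sum_le_add_of_subset_pair fun i hi => by
        simp only [pairSet, mem_filter, mem_insert, mem_singleton] at hi ⊢; omega
    _ = n := by omega

theorem mem_pairSet_max {n i : ℕ} (hi : i ∈ Icc 1 n) : i ∈ pairSet n (max i (n - i)) := by
  simp only [pairSet, mem_filter, mem_Icc] at hi ⊢
  omega

section EqualizingWeights

variable {m n : ℕ} {p w : ℕ → ℝ} {v : ℝ}

theorem exists_searcher_strategy (hn : n = 2 * m + 1) (hp : ∀ i ∈ Icc 1 n, 0 ≤ p i)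
    (hmono : ∀ i j : ℕ, 1 ≤ i → i ≤ j → j ≤ n → p j ≤ p i)
    (hw0 : ∀ j ∈ Icc (m + 1) n, 0 ≤ w j) (hw1 : ∑ j ∈ Icc (m + 1) n, w j = 1)
    (hwp : ∀ j ∈ Icc (m + 1) n, w j * p j = v) :
    ∃ x : Finset ℕ → ℝ, (∀ A, 0 ≤ x A) ∧ (∑ A ∈ feasibleSets n n, x A = 1) ∧
      ∀ i ∈ Icc 1 n, v ≤ (∑ A ∈ feasibleSets n n with i ∈ A, x A) * p i := by
  have hmaps : ∀ j ∈ Icc (m + 1) n, pairSet n j ∈ feasibleSets n n :=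
    fun j hj => pairSet_mem_feasibleSets (mem_Icc.mp hj).2
  refine ⟨fun A => ∑ j ∈ Icc (m + 1) n with pairSet n j = A, w j,
    fun A => sum_nonneg fun j hj => hw0 j (mem_filter.mp hj).1,
    (sum_fiberwise_of_maps_to hmaps w).trans hw1, fun i hi => ?_⟩
  rw [sum_filter_sum_fiberwise hmaps]
  set j := max i (n - i)
  have hj : j ∈ Icc (m + 1) n := by simp only [mem_Icc] at hi ⊢; omega
  have hij : j ∈ {j ∈ Icc (m + 1) n | i ∈ pairSet n j} :=
    mem_filter.mpr ⟨hj, mem_pairSet_max hi⟩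
  calc v = w j * p j := (hwp j hj).symm
    _ ≤ w j * p i := mul_le_mul_of_nonneg_left
        (hmono i j (mem_Icc.mp hi).1 (le_max_left _ _) (mem_Icc.mp hj).2) (hw0 j hj)
    _ ≤ _ := mul_le_mul_of_nonneg_right
        (single_le_sum (fun k hk => hw0 k (mem_filter.mp hk).1) hij) (hp i hi)

theorem exists_hider_strategy (hn : n = 2 * m + 1) (hv : 0 ≤ v)
    (hw0 : ∀ j ∈ Icc (m + 1) n, 0 ≤ w j) (hw1 : ∑ j ∈ Icc (m + 1) n, w j = 1)
    (hwp : ∀ j ∈ Icc (m + 1) n, w j * p j = v) :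
    ∃ h : ℕ → ℝ, (∀ i, 0 ≤ h i) ∧ (∑ i ∈ Icc 1 n, h i = 1) ∧
      ∀ A ∈ feasibleSets n n, ∑ i ∈ A, h i * p i ≤ v := by
  set T := Icc (m + 1) n
  refine ⟨fun i => if i ∈ T then w i else 0, fun i => ?_, ?_, fun A hA => ?_⟩
  · dsimp only
    split_ifs with hi
    exacts [hw0 i hi, le_rfl]
  · rw [sum_ite_mem, inter_eq_right.mpr (Icc_subset_Icc_left (by omega)), hw1]
  · have hcard : #(A ∩ T) ≤ 1 := (card_le_card fun i hi =>
      mem_filter.mpr ⟨(mem_inter.mp hi).1, (mem_Icc.mp (mem_inter.mp hi).2).1⟩).trans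
      (card_filter_lt_le_one_of_sum_le (hn ▸ (mem_filter.mp hA).2))
    calc ∑ i ∈ A, (if i ∈ T then w i else 0) * p i = ∑ i ∈ A, if i ∈ T then v else 0 :=
          sum_congr rfl fun i _ => by split_ifs with hi; exacts [hwp i hi, zero_mul _]
      _ = #(A ∩ T) * v := by rw [sum_ite_mem, sum_const, nsmul_eq_mul]
      _ ≤ v := mul_le_of_le_one_left hv (by exact_mod_cast hcard)

end EqualizingWeights

theorem game_value_general (m n : ℕ) (hn : n = 2 * m + 1)
    (p : ℕ → ℝ)
    (hpos : ∀ i ∈ Finset.Icc 1 n, 0 < p i)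
    (hmono : ∀ i j : ℕ, 1 ≤ i → i ≤ j → j ≤ n → p j ≤ p i)
    (S : ℝ) (hS : S = ∑ j ∈ Finset.Icc (m + 1) n, 1 / p j) :
    (∃ x : Finset ℕ → ℝ, (∀ A, 0 ≤ x A) ∧
      (∑ A ∈ feasibleSets n n, x A = 1) ∧
      (∀ i ∈ Finset.Icc 1 n,
        1 / S ≤ (∑ A ∈ (feasibleSets n n).filter (fun A => i ∈ A), x A) * p i)) ∧
    (∃ h : ℕ → ℝ, (∀ i, 0 ≤ h i) ∧
      (∑ i ∈ Finset.Icc 1 n, h i = 1) ∧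
      (∀ A ∈ feasibleSets n n, ∑ i ∈ A, h i * p i ≤ 1 / S)) := by
  have hpos' : ∀ j ∈ Icc (m + 1) n, 0 < p j := fun j hj =>
    hpos j (Icc_subset_Icc_left (by omega) hj)
  have hS0 : 0 < S :=
    hS ▸ sum_pos (fun j hj => one_div_pos.mpr (hpos' j hj)) (nonempty_Icc.2 (by omega))
  set w : ℕ → ℝ := fun j => 1 / p j / S
  have hw0 : ∀ j ∈ Icc (m + 1) n, 0 ≤ w j := fun j hj => by
    have := hpos' j hj; positivity
  have hw1 : ∑ j ∈ Icc (m + 1) n, w j = 1 := by rw [← sum_div, ← hS, div_self hS0.ne']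
  have hwp : ∀ j ∈ Icc (m + 1) n, w j * p j = 1 / S := fun j hj => by
    have := (hpos' j hj).ne'
    simp only [w]
    field_simp
  exact ⟨exists_searcher_strategy hn (fun i hi => (hpos i hi).le) hmono hw0 hw1 hwp,
    exists_hider_strategy hn (by positivity) hw0 hw1 hwp⟩

/-- For `n = 2m+1 = k`, `t_i = i` and nonincreasing positive capture
probabilities `p`, the game has value `1/S(p)` where
`S(p) = ∑_{j=m+1}^{2m+1} 1/p_j`: there is a mixed searcher strategy over the
feasible sets guaranteeing expected capture probability at least `1/S(p)`
against every hiding location, and a hider probability distribution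
guaranteeing expected capture probability at most `1/S(p)` against every
feasible search set. -/
theorem game_value (m n : ℕ) (hn : n = 2 * m + 1)
    (p : ℕ → ℝ)
    (hpos : ∀ i ∈ Finset.Icc 1 n, 0 < p i)
    (hple : ∀ i ∈ Finset.Icc 1 n, p i ≤ 1)
    (hmono : ∀ i j : ℕ, 1 ≤ i → i ≤ j → j ≤ n → p j ≤ p i)
    (S : ℝ) (hS : S = ∑ j ∈ Finset.Icc (m + 1) n, 1 / p j) :
    (∃ x : Finset ℕ → ℝ, (∀ A, 0 ≤ x A) ∧
      (∑ A ∈ feasibleSets n n, x A = 1) ∧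
      (∀ i ∈ Finset.Icc 1 n,
        1 / S ≤ (∑ A ∈ (feasibleSets n n).filter (fun A => i ∈ A), x A) * p i)) ∧
    (∃ h : ℕ → ℝ, (∀ i, 0 ≤ h i) ∧
      (∑ i ∈ Finset.Icc 1 n, h i = 1) ∧
      (∀ A ∈ feasibleSets n n, ∑ i ∈ A, h i * p i ≤ 1 / S)) :=
  game_value_general m n hn p hpos hmono S hS
end

section
/- Let n = 2m+1 = k, t_i = i, and let p_1 > p_2 > … > p_n > 0 be strictly decreasing; set S(p) = ∑_{j=m+1}^{2m+1} 1/p_j and let h̄ be the hider distribution with h̄_j = 1/(p_j S(p)) for j ≥ m+1 and h̄_j = 0 for j ≤ m. Then h̄ is the unique optimal hiding distribution: for every probability distribution h* on {1,…,n} with h* ≠ h̄, there exists a feasible search set of the form {j, n−j} (with {n,0} meaning {n}) for some j with m+1 ≤ j ≤ n against which the expected capture probability exceeds 1/S(p), i.e., p_j h*_j + p_{n−j} h*_{n−j} > 1/S(p). -/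
/-- For `n = 2m+1 = k`, `t_i = i` and strictly decreasing positive capture
probabilities `p`, the hider distribution `h̄` with `h̄_j = 1/(p_j S(p))` for
`m+1 ≤ j ≤ n` and `h̄_j = 0` otherwise is the unique optimal hiding
distribution: for every probability distribution `h*` on `{1,…,n}` with
`h* ≠ h̄`, there is a feasible search set `{j, n−j}` (with `{n,0}` meaning
`{n}`) for some `m+1 ≤ j ≤ n` against which the expected capture probability
exceeds `1/S(p)`, i.e. `p_j h*_j + p_{n−j} h*_{n−j} > 1/S(p)`. -/
theorem hider_strategy_unique (m n : ℕ) (hn : n = 2 * m + 1)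
    (p : ℕ → ℝ)
    (hpos : ∀ i ∈ Finset.Icc 1 n, 0 < p i)
    (hple : ∀ i ∈ Finset.Icc 1 n, p i ≤ 1)
    (hstrict : ∀ i j : ℕ, 1 ≤ i → i < j → j ≤ n → p j < p i)
    (S : ℝ) (hS : S = ∑ j ∈ Finset.Icc (m + 1) n, 1 / p j)
    (hbar : ℕ → ℝ)
    (hhbar : ∀ j, hbar j = if m + 1 ≤ j ∧ j ≤ n then 1 / (p j * S) else 0)
    (hstar : ℕ → ℝ)
    (hstar_nonneg : ∀ i, 0 ≤ hstar i)
    (hstar_supp : ∀ i, i ∉ Finset.Icc 1 n → hstar i = 0)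
    (hstar_sum : ∑ i ∈ Finset.Icc 1 n, hstar i = 1)
    (hne : hstar ≠ hbar) :
    ∃ j : ℕ, m + 1 ≤ j ∧ j ≤ n ∧
      1 / S < p j * hstar j + p (n - j) * hstar (n - j) := by
  by_contra hcon
  push_neg at hcon
  -- hcon : ∀ j, m+1 ≤ j → j ≤ n → p j * hstar j + p (n-j) * hstar (n-j) ≤ 1/S
  have hpos' : ∀ j ∈ Finset.Icc (m + 1) n, 0 < p j := by
    intro j hj
    rw [Finset.mem_Icc] at hj
    exact hpos j (Finset.mem_Icc.mpr ⟨by omega, hj.2⟩)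
  have hSpos : 0 < S := by
    rw [hS]
    apply Finset.sum_pos
    · intro j hj
      have := hpos' j hj
      positivity
    · exact ⟨m + 1, Finset.mem_Icc.mpr ⟨le_refl _, by omega⟩⟩
  have h0 : hstar 0 = 0 := hstar_supp 0 (by simp)
  -- the reflected sum
  have hrefl : ∑ j ∈ Finset.Icc (m + 1) n, hstar (n - j)
      = ∑ i ∈ Finset.Icc 1 m, hstar i := by
    rw [show ∑ i ∈ Finset.Icc 1 m, hstar i = ∑ i ∈ Finset.Icc 0 m, hstar i by
      apply Finset.sum_subset
      · intro x hx; rw [Finset.mem_Icc] at *; omega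
      · intro x hx hx'
        rw [Finset.mem_Icc] at hx hx'
        have : x = 0 := by omega
        rw [this]; exact h0]
    apply Finset.sum_nbij' (fun j => n - j) (fun i => n - i)
    · intro a ha; rw [Finset.mem_Icc] at *; omega
    · intro a ha; rw [Finset.mem_Icc] at *; omega
    · intro a ha; rw [Finset.mem_Icc] at ha; omega
    · intro a ha; rw [Finset.mem_Icc] at ha; omega
    · intro a _; rfl
  have hsplit : ∑ i ∈ Finset.Icc 1 m, hstar i + ∑ j ∈ Finset.Icc (m + 1) n, hstar j = 1 := by
    rw [← hstar_sum, ← Finset.sum_union (by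
      rw [Finset.disjoint_left]
      intro a ha hb
      rw [Finset.mem_Icc] at ha hb
      omega)]
    apply Finset.sum_congr _ (fun x _ => rfl)
    ext x
    simp only [Finset.mem_union, Finset.mem_Icc]
    omega
  -- total of the paired sums equals 1
  have hsum1 : ∑ j ∈ Finset.Icc (m + 1) n, (hstar j + hstar (n - j)) = 1 := by
    rw [Finset.sum_add_distrib, hrefl]
    linarith [hsplit]
  -- pointwise bound
  have hkey : ∀ j ∈ Finset.Icc (m + 1) n, hstar j + hstar (n - j) ≤ 1 / (p j * S) := by
    intro j hj
    rw [Finset.mem_Icc] at hj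
    have hpj := hpos' j (Finset.mem_Icc.mpr hj)
    have hc := hcon j hj.1 hj.2
    rw [le_div_iff₀ (by positivity)]
    rcases eq_or_lt_of_le hj.2 with hjn | hjn
    · subst hjn
      simp only [Nat.sub_self, h0, mul_zero, add_zero] at hc ⊢
      calc hstar j * (p j * S) = (p j * hstar j) * S := by ring
        _ ≤ (1 / S) * S := by nlinarith
        _ = 1 := by field_simp
    · have hlt : p j < p (n - j) := hstrict (n - j) j (by omega) (by omega) hj.2
      have hnn : 0 ≤ hstar (n - j) := hstar_nonneg (n - j)
      have h1 : p j * hstar j + p j * hstar (n - j) ≤ 1 / S := by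
        nlinarith
      calc (hstar j + hstar (n - j)) * (p j * S)
          = (p j * hstar j + p j * hstar (n - j)) * S := by ring
        _ ≤ (1 / S) * S := by nlinarith
        _ = 1 := by field_simp
  -- sum of the bounds also equals 1
  have hsum2 : ∑ j ∈ Finset.Icc (m + 1) n, 1 / (p j * S) = 1 := by
    have : ∀ j ∈ Finset.Icc (m + 1) n, 1 / (p j * S) = (1 / p j) * (1 / S) := by
      intro j hj
      rw [div_mul_eq_div_div, div_eq_mul_one_div]
    rw [Finset.sum_congr rfl this, ← Finset.sum_mul, ← hS]
    field_simp
  -- equality is forced pointwise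
  have heq : ∀ j ∈ Finset.Icc (m + 1) n, hstar j + hstar (n - j) = 1 / (p j * S) := by
    rw [← Finset.sum_eq_sum_iff_of_le hkey]
    rw [hsum1, hsum2]
  -- for j < n, hstar (n - j) = 0
  have hzero : ∀ j ∈ Finset.Icc (m + 1) n, j < n → hstar (n - j) = 0 := by
    intro j hj hjn
    have hjm := Finset.mem_Icc.mp hj
    have hpj := hpos' j hj
    have he := heq j hj
    have hc := hcon j hjm.1 hjm.2
    have hlt : p j < p (n - j) := hstrict (n - j) j (by omega) (by omega) hjm.2
    have hnn : 0 ≤ hstar (n - j) := hstar_nonneg (n - j)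
    -- p j * (hstar j + hstar (n-j)) = p j / (p j * S) = 1/S
    have h1 : p j * (hstar j + hstar (n - j)) = 1 / S := by
      rw [he]; field_simp
    nlinarith
  -- hstar j = 1/(p j * S) on [m+1, n]
  have hval : ∀ j ∈ Finset.Icc (m + 1) n, hstar j = 1 / (p j * S) := by
    intro j hj
    have hjm := Finset.mem_Icc.mp hj
    rcases eq_or_lt_of_le hjm.2 with hjn | hjn
    · subst hjn
      have he := heq j hj
      simpa [Nat.sub_self, h0] using he
    · have := hzero j hj hjn
      have he := heq j hj
      rw [this, add_zero] at he
      exact he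
  -- conclude hstar = hbar, contradiction
  apply hne
  funext i
  rw [hhbar i]
  split_ifs with h
  · exact hval i (Finset.mem_Icc.mpr h)
  · by_cases hi : i ∈ Finset.Icc 1 n
    · rw [Finset.mem_Icc] at hi
      -- 1 ≤ i ≤ m, so i = n - j, j = n - i ∈ [m+1, n), j < n
      have hji : n - (n - i) = i := by omega
      have := hzero (n - i) (Finset.mem_Icc.mpr ⟨by omega, by omega⟩) (by omega)
      rwa [hji] at this
    · exact hstar_supp i hi
end

section
/- Consider the game G(n,t,p,k) with t_i = i, capture probabilities p_1 ≥ p_2 ≥ … ≥ p_n > 0, and total search time k ≥ n. Suppose that in the reduced game on locations {1,…,n−1} with total search time k − n there is a mixed searcher strategy μ over sets B ⊆ {1,…,n−1} with ∑_{i∈B} i ≤ k − n such that for every location i ∈ {1,…,n−1}, p_i times the total μ-probability of sets containing i is at least p_n. Then the original game has value p_n: the searcher strategy that plays B ∪ {n} with probability μ(B) uses feasible sets (total search time at most k) and guarantees expected capture probability at least p_n against every location i ∈ {1,…,n}, while the hider, by hiding at location n, guarantees expected capture probability at most p_n against every feasible search set. -/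
lemma mem_feasibleSets {n k : ℕ} {A : Finset ℕ} :
    A ∈ feasibleSets n k ↔ A ⊆ Finset.Icc 1 n ∧ (∑ i ∈ A, i) ≤ k := by
  simp [feasibleSets]

/-- For `t_i = i`, nonincreasing positive capture probabilities and total
search time `k ≥ n`: if in the reduced game on locations `{1,…,n−1}` with
total search time `k − n` there is a mixed searcher strategy `μ` over the
feasible sets `B` guaranteeing, at each location `i ≤ n−1`, capture
probability `p_i · μ{B : i ∈ B} ≥ p_n`, then the original game has value
`p_n`: playing `B ∪ {n}` with probability `μ(B)` uses feasible sets and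
guarantees capture probability at least `p_n` at every location `i ≤ n`,
while hiding at location `n` concedes at most `p_n` against every feasible
search set. -/
theorem value_pn_iff_reduced (n k : ℕ) (hn : 1 ≤ n) (hk : n ≤ k)
    (p : ℕ → ℝ)
    (hpos : ∀ i ∈ Finset.Icc 1 n, 0 < p i)
    (hple : ∀ i ∈ Finset.Icc 1 n, p i ≤ 1)
    (hmono : ∀ i j : ℕ, 1 ≤ i → i ≤ j → j ≤ n → p j ≤ p i)
    (μ : Finset ℕ → ℝ)
    (hμ_nonneg : ∀ B, 0 ≤ μ B)
    (hμ_sum : ∑ B ∈ feasibleSets (n - 1) (k - n), μ B = 1)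
    (hμ_guar : ∀ i ∈ Finset.Icc 1 (n - 1),
      p n ≤ p i * ∑ B ∈ (feasibleSets (n - 1) (k - n)).filter (fun B => i ∈ B), μ B) :
    (∀ B ∈ feasibleSets (n - 1) (k - n), (∑ i ∈ insert n B, i) ≤ k) ∧
    (∀ i ∈ Finset.Icc 1 n,
      p n ≤ p i * ∑ B ∈ (feasibleSets (n - 1) (k - n)).filter (fun B => i ∈ insert n B), μ B) ∧
    (∀ A ∈ feasibleSets n k, (if n ∈ A then p n else 0) ≤ p n) := by
  have hnB : ∀ B ∈ feasibleSets (n - 1) (k - n), n ∉ B := by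
    intro B hB hnB
    have := (mem_feasibleSets.mp hB).1 hnB
    have := (Finset.mem_Icc.mp this).2
    omega
  refine ⟨?_, ?_, ?_⟩
  · intro B hB
    rw [Finset.sum_insert (hnB B hB)]
    have := (mem_feasibleSets.mp hB).2
    omega
  · intro i hi
    rcases eq_or_ne i n with rfl | hne
    · have : (feasibleSets (i - 1) (k - i)).filter (fun B => i ∈ insert i B)
          = feasibleSets (i - 1) (k - i) := by
        apply Finset.filter_true_of_mem
        intro B _; exact Finset.mem_insert_self _ _
      rw [this, hμ_sum, mul_one]
    · have hi' : i ∈ Finset.Icc 1 (n - 1) := by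
        have := Finset.mem_Icc.mp hi
        exact Finset.mem_Icc.mpr ⟨this.1, by omega⟩
      have : (feasibleSets (n - 1) (k - n)).filter (fun B => i ∈ insert n B)
          = (feasibleSets (n - 1) (k - n)).filter (fun B => i ∈ B) := by
        apply Finset.filter_congr
        intro B _
        simp [Finset.mem_insert, hne]
      rw [this]
      exact hμ_guar i hi'
  · intro A hA
    split
    · exact le_refl _
    · exact le_of_lt (hpos n (Finset.mem_Icc.mpr ⟨hn, le_rfl⟩))
end

section
/- Consider the game with unit search times t_i = 1, capture probabilities 0 < p_1 ≤ p_2 ≤ … ≤ p_n, total search time k ≤ n, and λ = ∑_{i=1}^{n} 1/p_i. Then the hider can guarantee that the searcher wins with probability at most min(k/λ, p_1): (i) the hiding distribution h_i = 1/(λ p_i) is a probability distribution and satisfies ∑_{i∈A} h_i p_i = |A|/λ ≤ k/λ for every set A ⊆ {1,…,n} with |A| ≤ k; and (ii) hiding at location 1 yields expected capture probability at most p_1 against every such set A. Consequently there is a mixed hiding strategy whose expected capture probability against every feasible search set is at most min(k/λ, p_1). -/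
/-- Gal–Casas game with unit search times, nondecreasing positive capture
probabilities `0 < p_1 ≤ … ≤ p_n`, total search time `k ≤ n` and
`λ = ∑_{i=1}^n 1/p_i`. The hider can guarantee capture probability at most
`min(k/λ, p_1)`: (i) the distribution `h_i = 1/(λ p_i)` is a probability
distribution on `{1,…,n}` and gives `∑_{i∈A} h_i p_i = |A|/λ ≤ k/λ` against
every search set `A ⊆ {1,…,n}` with `|A| ≤ k`; (ii) hiding at location `1`
concedes at most `p_1` against every such set; hence (iii) some mixed hiding
strategy concedes at most `min(k/λ, p_1)` against every feasible search set. -/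
theorem gal_casas_hider_guarantee (n k : ℕ) (hn : 1 ≤ n) (hk : k ≤ n)
    (p : ℕ → ℝ)
    (hpos : ∀ i ∈ Finset.Icc 1 n, 0 < p i)
    (hple : ∀ i ∈ Finset.Icc 1 n, p i ≤ 1)
    (hmono : ∀ i j : ℕ, 1 ≤ i → i ≤ j → j ≤ n → p i ≤ p j)
    (lam : ℝ) (hlam : lam = ∑ i ∈ Finset.Icc 1 n, 1 / p i)
    (h : ℕ → ℝ)
    (hh : ∀ i, h i = if 1 ≤ i ∧ i ≤ n then 1 / (lam * p i) else 0) :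
    ((∀ i, 0 ≤ h i) ∧ (∑ i ∈ Finset.Icc 1 n, h i = 1) ∧
      (∀ A : Finset ℕ, A ⊆ Finset.Icc 1 n → A.card ≤ k →
        (∑ i ∈ A, h i * p i = (A.card : ℝ) / lam ∧ (A.card : ℝ) / lam ≤ (k : ℝ) / lam))) ∧
    (∀ A : Finset ℕ, A ⊆ Finset.Icc 1 n → A.card ≤ k →
      (if 1 ∈ A then p 1 else 0) ≤ p 1) ∧
    (∃ h' : ℕ → ℝ, (∀ i, 0 ≤ h' i) ∧ (∑ i ∈ Finset.Icc 1 n, h' i = 1) ∧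
      ∀ A : Finset ℕ, A ⊆ Finset.Icc 1 n → A.card ≤ k →
        ∑ i ∈ A, h' i * p i ≤ min ((k : ℝ) / lam) (p 1)) := by
  have h1n : (1:ℕ) ∈ Finset.Icc 1 n := Finset.mem_Icc.2 ⟨le_refl 1, hn⟩
  have hlampos : 0 < lam := by
    rw [hlam]
    apply Finset.sum_pos
    · intro i hi
      exact div_pos one_pos (hpos i hi)
    · exact ⟨1, h1n⟩
  have hp1 : 0 < p 1 := hpos 1 h1n
  have hnonneg : ∀ i, 0 ≤ h i := by
    intro i
    rw [hh i]
    split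
    · rename_i hi
      exact le_of_lt (div_pos one_pos (mul_pos hlampos (hpos i (Finset.mem_Icc.2 hi))))
    · exact le_refl 0
  have hsum : ∑ i ∈ Finset.Icc 1 n, h i = 1 := by
    have : ∀ i ∈ Finset.Icc 1 n, h i = (1 / lam) * (1 / p i) := by
      intro i hi
      rw [hh i, if_pos (Finset.mem_Icc.1 hi)]
      field_simp
    rw [Finset.sum_congr rfl this, ← Finset.mul_sum, ← hlam]
    field_simp
  have hA : ∀ A : Finset ℕ, A ⊆ Finset.Icc 1 n → A.card ≤ k →
      ∑ i ∈ A, h i * p i = (A.card : ℝ) / lam := by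
    intro A hAsub hAcard
    have : ∀ i ∈ A, h i * p i = 1 / lam := by
      intro i hi
      have hi' := Finset.mem_Icc.1 (hAsub hi)
      have hpi := hpos i (hAsub hi)
      rw [hh i, if_pos hi']
      field_simp
    rw [Finset.sum_congr rfl this, Finset.sum_const, nsmul_eq_mul]
    ring
  refine ⟨⟨hnonneg, hsum, fun A hs hc => ⟨hA A hs hc, ?_⟩⟩, ?_, ?_⟩
  · exact div_le_div_of_nonneg_right (by exact_mod_cast hc) hlampos.le
  · intro A _ _
    split
    · exact le_refl _
    · exact le_of_lt hp1
  · by_cases hcase : (k : ℝ) / lam ≤ p 1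
    · refine ⟨h, hnonneg, hsum, fun A hs hc => ?_⟩
      rw [hA A hs hc, min_eq_left hcase]
      exact div_le_div_of_nonneg_right (by exact_mod_cast hc) hlampos.le
    · refine ⟨fun i => if i = 1 then 1 else 0, fun i => by positivity, ?_, ?_⟩
      · rw [Finset.sum_ite_eq' (Finset.Icc 1 n) 1 (fun _ => (1:ℝ)), if_pos h1n]
      · intro A hs hc
        have hmin : min ((k : ℝ) / lam) (p 1) = p 1 :=
          min_eq_right (le_of_lt (lt_of_not_ge hcase))
        rw [hmin]
        have : ∀ i ∈ A, (if i = 1 then (1:ℝ) else 0) * p i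
            = if i = 1 then p i else 0 := by
          intro i _; split <;> ring
        rw [Finset.sum_congr rfl this]
        by_cases h1A : 1 ∈ A
        · have : ∑ i ∈ A, (if i = 1 then p i else 0) = p 1 := by
            rw [Finset.sum_ite_eq' A 1 p, if_pos h1A]
          rw [this]
        · have : ∑ i ∈ A, (if i = 1 then p i else 0) = 0 := by
            rw [Finset.sum_ite_eq' A 1 p, if_neg h1A]
          rw [this]
          exact le_of_lt hp1
end

section
/- Let 0 < l < h < 1 and consider the 2×2 zero-sum game with payoff matrix A = [[(2 − h² − l²)/4, (2 − h − l)/4], [(2 − h − l)/4, (4 − (h + l)²)/8]] (searcher maximizing), whose rows/columns are the strategies rs and rd. Set a = 2h(1−h) + 2l(1−l) and b = 2(h+l) − (h+l)². Then 8A = (4 − 2h − 2l)·J + diag(a, b), where J is the all-ones matrix; a > 0 and b > 0; and the mixed strategy σ = (b/(a+b), a/(a+b)) is optimal for both players: for each pure strategy of the opponent, the expected payoff under σ equals V = (4 − 2h − 2l)/8 + ab/(8(a+b)), so V is the value of the game. -/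
/-!
Up to the factor `8`, the payoff matrix is a constant matrix plus the positive diagonal
`diag(a, b)`. Against a constant matrix every strategy earns the same, so the optimal strategy
is the one equalizing the diagonal part: weights proportional to `(b, a)`, which earn
`ab / (a + b)` against both pure strategies.
-/

open Matrix

section EqualizingStrategy

variable (a b c : ℝ)

theorem sum_equalizer_mul_const_add_diagonal_col (hab : a + b ≠ 0) (j : Fin 2) :
    ∑ i, ![b / (a + b), a / (a + b)] i * (c • !![(1 : ℝ), 1; 1, 1] + diagonal ![a, b]) i j =
      c + a * b / (a + b) := by
  fin_cases j <;>
    · simp [Fin.sum_univ_two]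
      field_simp
      ring

theorem sum_equalizer_mul_const_add_diagonal_row (hab : a + b ≠ 0) (i : Fin 2) :
    ∑ j, ![b / (a + b), a / (a + b)] j * (c • !![(1 : ℝ), 1; 1, 1] + diagonal ![a, b]) i j =
      c + a * b / (a + b) := by
  fin_cases i <;>
    · simp [Fin.sum_univ_two]
      field_simp
      ring

end EqualizingStrategy

theorem learningGame_smul_eq_const_add_diagonal (l h : ℝ) :
    (8 : ℝ) • !![(2 - h ^ 2 - l ^ 2) / 4, (2 - h - l) / 4;
                 (2 - h - l) / 4, (4 - (h + l) ^ 2) / 8] =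
      (4 - 2 * h - 2 * l) • !![(1 : ℝ), 1; 1, 1] +
        diagonal ![2 * h * (1 - h) + 2 * l * (1 - l), 2 * (h + l) - (h + l) ^ 2] := by
  ext i j
  fin_cases i <;> fin_cases j <;> simp [diagonal] <;> ring

theorem mul_one_sub_add_mul_one_sub_pos {x y : ℝ} (hx₀ : 0 < x) (hx₁ : x < 1) (hy₀ : 0 < y)
    (hy₁ : y < 1) :
    0 < 2 * x * (1 - x) + 2 * y * (1 - y) := by
  nlinarith

theorem two_mul_sub_sq_pos {s : ℝ} (hs₀ : 0 < s) (hs₂ : s < 2) : 0 < 2 * s - s ^ 2 := by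
  nlinarith

/-- Solution of the two-period learning game with `0 < l < h < 1`. For the
payoff matrix `A = [[(2−h²−l²)/4, (2−h−l)/4], [(2−h−l)/4, (4−(h+l)²)/8]]` on
strategies `(rs, rd)` and `a = 2h(1−h) + 2l(1−l)`, `b = 2(h+l) − (h+l)²`, one
has `8A = (4−2h−2l)·J + diag(a, b)` with `a, b > 0`, and the mixed strategy
`σ = (b/(a+b), a/(a+b))` is optimal for both players, giving against every
pure strategy of the opponent exactly the value
`V = (4−2h−2l)/8 + ab/(8(a+b))`. -/
theorem learning_game_solution (l h : ℝ) (hl : 0 < l) (hlh : l < h) (hh : h < 1)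
    (A : Matrix (Fin 2) (Fin 2) ℝ)
    (hA : A = !![(2 - h ^ 2 - l ^ 2) / 4, (2 - h - l) / 4;
                 (2 - h - l) / 4, (4 - (h + l) ^ 2) / 8])
    (a b : ℝ)
    (ha : a = 2 * h * (1 - h) + 2 * l * (1 - l))
    (hb : b = 2 * (h + l) - (h + l) ^ 2)
    (σ : Fin 2 → ℝ) (hσ : σ = ![b / (a + b), a / (a + b)])
    (V : ℝ) (hV : V = (4 - 2 * h - 2 * l) / 8 + a * b / (8 * (a + b))) :
    ((8 : ℝ) • A = (4 - 2 * h - 2 * l) • !![(1 : ℝ), 1; 1, 1] + Matrix.diagonal ![a, b]) ∧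
    0 < a ∧ 0 < b ∧
    (∀ c : Fin 2, ∑ r : Fin 2, σ r * A r c = V) ∧
    (∀ r : Fin 2, ∑ c : Fin 2, σ c * A r c = V) := by
  set M := (4 - 2 * h - 2 * l) • !![(1 : ℝ), 1; 1, 1] + Matrix.diagonal ![a, b]
  have hdecomp : (8 : ℝ) • A = M := by
    subst hA ha hb
    exact learningGame_smul_eq_const_add_diagonal l h
  have ha₀ : 0 < a := ha ▸ mul_one_sub_add_mul_one_sub_pos (hl.trans hlh) hh hl (hlh.trans hh)
  have hb₀ : 0 < b := hb ▸ two_mul_sub_sq_pos (by linarith) (by linarith)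
  have hab : a + b ≠ 0 := by positivity
  have hAM : ∀ i j, A i j = M i j / 8 := fun i j => by
    rw [← hdecomp, Matrix.smul_apply, smul_eq_mul,
      mul_div_cancel_left₀ _ (by norm_num : (8 : ℝ) ≠ 0)]
  have hValue : (4 - 2 * h - 2 * l + a * b / (a + b)) / 8 = V := by
    rw [hV]
    field_simp
  refine ⟨hdecomp, ha₀, hb₀, fun j => ?_, fun i => ?_⟩
  · calc ∑ r, σ r * A r j = (∑ r, σ r * M r j) / 8 := by
          simp only [hAM, mul_div_assoc', Finset.sum_div]
      _ = V := by
          rw [hσ, ← hValue]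
          exact congrArg (· / 8) (sum_equalizer_mul_const_add_diagonal_col a b _ hab j)
  · calc ∑ c, σ c * A i c = (∑ c, σ c * M i c) / 8 := by
          simp only [hAM, mul_div_assoc', Finset.sum_div]
      _ = V := by
          rw [hσ, ← hValue]
          exact congrArg (· / 8) (sum_equalizer_mul_const_add_diagonal_row a b _ hab i)
end

section
/- Let 0 < l < h ≤ 1 and set a = 2h(1−h) + 2l(1−l) and b = 2(h+l) − (h+l)² (the diagonal entries of the reduced diagonal game of the two-period learning game). Then b − a = (h − l)² > 0, so b > a > 0, and consequently the optimal probability b/(a+b) of playing rs (returning after a successful escape to the same location) is strictly greater than 1/2. -/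
/-- For the diagonal entries `a = 2h(1−h) + 2l(1−l)` and `b = 2(h+l) − (h+l)²`
of the reduced diagonal game of the two-period learning game with
`0 < l < h ≤ 1`, one has `b − a = (h − l)² > 0`, hence `b > a > 0`, and the
optimal probability `b/(a+b)` of playing `rs` exceeds `1/2`. -/
theorem return_probability_gt_half (l h : ℝ) (hl : 0 < l) (hlh : l < h) (hh : h ≤ 1)
    (a b : ℝ) (ha : a = 2 * h * (1 - h) + 2 * l * (1 - l))
    (hb : b = 2 * (h + l) - (h + l) ^ 2) :
    b - a = (h - l) ^ 2 ∧ 0 < (h - l) ^ 2 ∧ 0 < a ∧ a < b ∧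
      1 / 2 < b / (a + b) := by
  have hd : b - a = (h - l) ^ 2 := by rw [ha, hb]; ring
  have hp : 0 < (h - l) ^ 2 := pow_pos (sub_pos.mpr hlh) 2
  have ha0 : 0 < a := by nlinarith
  have hab : a < b := by nlinarith
  refine ⟨hd, hp, ha0, hab, ?_⟩
  rw [div_lt_div_iff₀ (by norm_num) (by linarith)]
  linarith
end
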